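/- Let A be an m×m primitive matrix with nonnegative integer entries, let N ≥ 1 be an integer, let u = (u₁,…,u_m) be a vector of positive integers with (A·u)ᵢ ≤ N·uᵢ for every i, and set g = gcd(u₁,…,u_m). Then there exists an integer k ≥ 1 such that every row of A^k is (g·N^k, u)-quasi-rearrangeable; moreover, for each i, the rearranging matrix for the i-th row of A^k can be chosen with exactly uᵢ/g rows. -/

import Mathlib

/-
Write u = g • v with gcd v = 1 and fix a Bézout vector z, ∑ z_j v_j = 1. Since A u ≤ N u, the
row a of A^k indexed by i has v-weight at most v_i N^k, and it must be split into v_i rows of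
v-weight at most N^k. Take v_i - 1 equal rows c = ⌊a / v_i⌋ + δ z, where the shift 0 ≤ δ ≤ ∑ v
lifts the weight of c to at least a 1/v_i share of the total without exceeding N^k, and put the
remainder into the last row, which then weighs no more than c. All rows are nonnegative once every
entry of a dominates v_i² (∑ v) |z_j|, and the entries of powers of a primitive matrix grow like
m^k when m ≥ 2 (when m = 1 there is a single row and nothing to split).
-/
open Finset Matrix

/-- `A` is primitive: some power of `A` has all entries positive. -/
def Matrix.IsPrimitiveNat {m : ℕ} (A : Matrix (Fin m) (Fin m) ℕ) : Prop :=
  ∃ n : ℕ, 1 ≤ n ∧ ∀ i j, 0 < (A ^ n) i j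

theorem Finset.exists_sum_mul_eq_one_of_gcd_eq_one {ι : Type*} (s : Finset ι) {v : ι → ℕ}
    (hv : s.gcd v = 1) : ∃ z : ι → ℤ, ∑ j ∈ s, z j * v j = 1 := by
  obtain ⟨z, hz⟩ := s.gcd_eq_sum_mul fun j ↦ (v j : ℤ)
  have hgcd : s.gcd (fun j ↦ (v j : ℤ)) = 1 := by
    refine Int.eq_one_of_dvd_one (Int.nonneg_of_normalize_eq_self normalize_gcd) ?_
    rw [← Int.natAbs_dvd_natAbs, Int.natAbs_one, ← hv]
    exact dvd_gcd fun j hj ↦ Int.natAbs_dvd_natAbs.mpr (gcd_dvd hj)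
  exact ⟨z, by simpa [mul_comm, hz] using hgcd⟩

theorem Fintype.one_lt_card_of_gcd_eq_one {ι : Type*} [Fintype ι] {v : ι → ℕ} (hv : univ.gcd v = 1)
    {i : ι} (hi : 1 < v i) : 1 < Fintype.card ι := by
  by_contra! hcard
  have := Fintype.card_le_one_iff_subsingleton.mp hcard
  have huniv : (univ : Finset ι) = {i} :=
    eq_singleton_iff_unique_mem.mpr ⟨mem_univ i, fun j _ ↦ Subsingleton.elim j i⟩
  rw [huniv, gcd_singleton, normalize_eq] at hv
  omega

namespace Matrix

variable {ι : Type*} [Fintype ι] [DecidableEq ι]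

theorem card_pow_le_pow_succ_apply {B : Matrix ι ι ℕ} (hB : ∀ i j, 0 < B i j) (r : ℕ) (i j : ι) :
    Fintype.card ι ^ r ≤ (B ^ (r + 1)) i j := by
  induction r generalizing j with
  | zero => simpa using Nat.one_le_iff_ne_zero.mpr (hB i j).ne'
  | succ r ih =>
    calc Fintype.card ι ^ (r + 1) = ∑ _l : ι, Fintype.card ι ^ r * 1 := by
          simp [pow_succ, mul_comm]
      _ ≤ ∑ l, (B ^ (r + 1)) i l * B l j :=
          sum_le_sum fun l _ ↦ Nat.mul_le_mul (ih l) (hB l j)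
      _ = (B ^ (r + 1 + 1)) i j := by rw [pow_succ _ (r + 1), mul_apply]

theorem pow_mulVec_le {A : Matrix ι ι ℕ} {u : ι → ℕ} {N : ℕ} (h : A *ᵥ u ≤ N • u) (k : ℕ) :
    A ^ k *ᵥ u ≤ N ^ k • u := by
  induction k with
  | zero => simp
  | succ k ih =>
    intro i
    calc (A ^ (k + 1) *ᵥ u) i = (fun j ↦ (A ^ k) i j) ⬝ᵥ (A *ᵥ u) := by
          rw [pow_succ, ← mulVec_mulVec]; rfl
      _ ≤ (fun j ↦ (A ^ k) i j) ⬝ᵥ (N • u) :=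
          dotProduct_le_dotProduct_of_nonneg_left h fun _ ↦ Nat.zero_le _
      _ = N * (A ^ k *ᵥ u) i := by rw [dotProduct_smul]; rfl
      _ ≤ N * (N ^ k * u i) := Nat.mul_le_mul_left N (ih i)
      _ = (N ^ (k + 1) • u) i := by simp [pow_succ]; ring

theorem le_pow_mul_succ_apply {A : Matrix ι ι ℕ} {n : ℕ} (hA : ∀ i j, 0 < (A ^ n) i j)
    (hι : 1 < Fintype.card ι) (b : ℕ) (i j : ι) : b ≤ (A ^ (n * (b + 1))) i j :=
  calc b ≤ 2 ^ b := Nat.lt_two_pow_self.le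
    _ ≤ Fintype.card ι ^ b := Nat.pow_le_pow_left hι b
    _ ≤ (A ^ (n * (b + 1))) i j := pow_mul A n (b + 1) ▸ card_pow_le_pow_succ_apply hA b i j

end Matrix

section Rearranging

variable {ι κ : Type*} [Fintype ι] [Fintype κ]

def IsRearrangingMatrix (C : κ → ι → ℕ) (a u : ι → ℕ) (N : ℕ) : Prop :=
  (∀ j, ∑ s, C s j = a j) ∧ ∀ s, ∑ j, C s j * u j ≤ N

theorem isRearrangingMatrix_toNat {D : κ → ι → ℤ} (hD : ∀ s j, 0 ≤ D s j) {a u : ι → ℕ} {N : ℕ}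
    (hcol : ∀ j, ∑ s, D s j = a j) (hrow : ∀ s, ∑ j, D s j * u j ≤ N) :
    IsRearrangingMatrix (fun s j ↦ (D s j).toNat) a u N := by
  have hD' : ∀ s j, ((D s j).toNat : ℤ) = D s j := fun s j ↦ Int.toNat_of_nonneg (hD s j)
  refine ⟨fun j ↦ ?_, fun s ↦ ?_⟩
  · have : ((∑ s, (D s j).toNat : ℕ) : ℤ) = a j := by push_cast [hD']; exact hcol j
    exact_mod_cast this
  · have : ((∑ j, (D s j).toNat * u j : ℕ) : ℤ) ≤ N := by push_cast [hD']; exact hrow s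
    exact_mod_cast this

theorem sum_mul_le_succ_mul_sum_div_mul_add (a v : ι → ℕ) (q : ℕ) :
    ∑ j, a j * v j ≤ (q + 1) * ∑ j, a j / (q + 1) * v j + q * ∑ j, v j := by
  simp only [mul_sum, ← sum_add_distrib, ← mul_assoc, ← add_mul]
  refine sum_le_sum fun j _ ↦ Nat.mul_le_mul_right _ ?_
  have := Nat.div_add_mod (a j) (q + 1)
  have : a j % (q + 1) < q + 1 := Nat.mod_lt _ q.succ_pos
  omega

variable {v : ι → ℕ} {q N : ℕ} {a : ι → ℕ}

theorem exists_isRearrangingMatrix_of_common_row {c : ι → ℤ} (hc : 0 < q → ∀ j, 0 ≤ c j)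
    (hca : ∀ j, q * c j ≤ a j) (hcN : ∑ j, c j * v j ≤ N)
    (hac : ∑ j, (a j : ℤ) * v j ≤ (q + 1) * ∑ j, c j * v j) :
    ∃ C : Fin (q + 1) → ι → ℕ, IsRearrangingMatrix C a v N := by
  refine ⟨_, isRearrangingMatrix_toNat (D := Fin.lastCases (fun j ↦ a j - q * c j) fun _ ↦ c)
    (fun s j ↦ ?_) (fun j ↦ ?_) (fun s ↦ ?_)⟩
  · induction s using Fin.lastCases with
    | last => simpa using hca j
    | cast s => simpa using hc (Fin.pos s) j
  · simp [Fin.sum_univ_castSucc]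
  · induction s using Fin.lastCases with
    | last =>
      have hlast : ∑ j, ((a j : ℤ) - q * c j) * v j =
          ∑ j, (a j : ℤ) * v j - q * ∑ j, c j * v j := by
        simp only [sub_mul, sum_sub_distrib, mul_sum, mul_assoc]
      simp only [Fin.lastCases_last, hlast]
      linarith
    | cast s => simpa using hcN

theorem exists_isRearrangingMatrix_of_sum_mul_eq_one {z : ι → ℤ} (hz : ∑ j, z j * v j = 1)
    (ha : ∀ j, (q + 1) * (q * (∑ i, v i) * (z j).natAbs) ≤ a j)
    (hN : ∑ j, a j * v j ≤ (q + 1) * N) :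
    ∃ C : Fin (q + 1) → ι → ℕ, IsRearrangingMatrix C a v N := by
  set V := ∑ i, v i
  set d : ι → ℕ := fun j ↦ a j / (q + 1)
  set F := ∑ j, d j * v j
  set δ := min (N - F) V
  have hdz : ∀ j, q * V * (z j).natAbs ≤ d j := fun j ↦
    (Nat.le_div_iff_mul_le q.succ_pos).mpr (by linarith [ha j])
  have hF : (q + 1) * F ≤ ∑ j, a j * v j ∧ ∑ j, a j * v j ≤ (q + 1) * F + q * V := by
    refine ⟨?_, sum_mul_le_succ_mul_sum_div_mul_add a v q⟩
    simp only [F, mul_sum, ← mul_assoc]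
    exact sum_le_sum fun j _ ↦ Nat.mul_le_mul_right _ (Nat.mul_div_le _ _)
  have hFN : F ≤ N := Nat.le_of_mul_le_mul_left (hF.1.trans hN) q.succ_pos
  have hshift : ∀ j, |(δ : ℤ) * z j| ≤ V * |z j| := fun j ↦ by
    rw [abs_mul, Nat.abs_cast]
    exact mul_le_mul_of_nonneg_right (mod_cast min_le_right _ _) (abs_nonneg _)
  have hweight : ∑ j, ((d j : ℤ) + δ * z j) * v j = F + δ := by
    simp only [add_mul, sum_add_distrib, mul_assoc, ← mul_sum, hz, F]
    push_cast; ring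
  refine exists_isRearrangingMatrix_of_common_row (c := fun j ↦ d j + δ * z j) ?_ ?_ ?_ ?_
  · intro hq j
    have hVd : ((V * (z j).natAbs : ℕ) : ℤ) ≤ d j :=
      mod_cast (mul_assoc q V _ ▸ Nat.le_mul_of_pos_left _ hq).trans (hdz j)
    have := neg_abs_le ((δ : ℤ) * z j)
    push_cast at hVd ⊢
    linarith [hshift j]
  · intro j
    have hδz : (q : ℤ) * (δ * z j) ≤ q * (V * |z j|) :=
      mul_le_mul_of_nonneg_left ((le_abs_self _).trans (hshift j)) (by positivity)
    have hda : ((q + 1) * d j : ℕ) ≤ (a j : ℤ) := mod_cast Nat.mul_div_le _ _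
    have hdz' : ((q * V * (z j).natAbs : ℕ) : ℤ) ≤ d j := mod_cast hdz j
    push_cast at hda hdz' ⊢
    linarith
  · rw [hweight]; omega
  · have hSδ : ∑ j, a j * v j ≤ (q + 1) * (F + δ) := by
      rcases min_cases (N - F) V with ⟨hδ, -⟩ | ⟨hδ, -⟩ <;> simp only [δ, hδ]
      · rwa [Nat.add_sub_cancel' hFN]
      · nlinarith [hF.2]
    rw [hweight]
    exact_mod_cast hSδ

end Rearranging

theorem exists_pow_isRearrangingMatrix {ι : Type*} [Fintype ι] [DecidableEq ι]
    {A : Matrix ι ι ℕ} {n : ℕ} (hn : 0 < n) (hA : ∀ i j, 0 < (A ^ n) i j) {v : ι → ℕ}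
    (hv0 : ∀ i, 0 < v i) (hv : univ.gcd v = 1) {N : ℕ} (hAv : A *ᵥ v ≤ N • v) :
    ∃ k, 0 < k ∧ ∀ i, ∃ C : Fin (v i) → ι → ℕ, IsRearrangingMatrix C ((A ^ k) i) v (N ^ k) := by
  obtain ⟨z, hz⟩ := univ.exists_sum_mul_eq_one_of_gcd_eq_one hv
  set V := ∑ j, v j
  set B := V * (V * V * ∑ j, (z j).natAbs)
  set k := n * (B + 1)
  refine ⟨k, Nat.mul_pos hn B.succ_pos, fun i ↦ ?_⟩
  obtain ⟨q, hq⟩ := Nat.exists_eq_add_one_of_ne_zero (hv0 i).ne'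
  rw [hq]
  refine exists_isRearrangingMatrix_of_sum_mul_eq_one hz (fun j ↦ ?_) ?_
  · rcases Nat.eq_zero_or_pos q with rfl | hq0
    · simp
    have hcard := Fintype.one_lt_card_of_gcd_eq_one hv (i := i) (by omega)
    have hvV : v i ≤ V := single_le_sum (fun _ _ ↦ Nat.zero_le _) (mem_univ i)
    have hzZ : (z j).natAbs ≤ ∑ j, (z j).natAbs :=
      single_le_sum (f := fun j ↦ (z j).natAbs) (fun _ _ ↦ Nat.zero_le _) (mem_univ j)
    refine le_trans ?_ (le_pow_mul_succ_apply hA hcard B i j)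
    exact Nat.mul_le_mul (by omega) (Nat.mul_le_mul (Nat.mul_le_mul_right V (by omega)) hzZ)
  · simpa [mulVec, dotProduct, hq, mul_comm] using pow_mulVec_le hAv k i

theorem stmt2_general {m : ℕ} (hm : 1 ≤ m) (A : Matrix (Fin m) (Fin m) ℕ)
    (hA : A.IsPrimitiveNat) (N : ℕ)
    (u : Fin m → ℕ) (hu : ∀ i, 0 < u i)
    (hle : ∀ i, A.mulVec u i ≤ N * u i) :
    ∃ k : ℕ, 1 ≤ k ∧ ∀ i : Fin m,
      ∃ C : Fin (u i / Finset.univ.gcd u) → Fin m → ℕ,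
        (∀ j, ∑ s, C s j = (A ^ k) i j) ∧
        (∀ s, ∑ j, C s j * u j ≤ Finset.univ.gcd u * N ^ k) := by
  obtain ⟨n, hn, hAn⟩ := hA
  obtain ⟨v, huv, hv⟩ := extract_gcd u (univ_nonempty_iff.mpr ⟨⟨0, hm⟩⟩)
  set g := univ.gcd u
  replace huv : u = g • v := funext fun j ↦ huv j (mem_univ j)
  have hg : 0 < g := Nat.pos_of_ne_zero fun h ↦ (hu ⟨0, hm⟩).ne' (by simp [huv, h])
  have hv0 : ∀ i, 0 < v i := fun i ↦ Nat.pos_of_mul_pos_left (by simpa [huv] using hu i)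
  have hAv : A *ᵥ v ≤ N • v := fun i ↦ by
    have := hle i
    rw [huv, mulVec_smul] at this
    simp only [Pi.smul_apply, smul_eq_mul, mul_left_comm N] at this
    exact Nat.le_of_mul_le_mul_left this hg
  obtain ⟨k, hk, hC⟩ := exists_pow_isRearrangingMatrix hn hAn hv0 hv hAv
  refine ⟨k, hk, fun i ↦ ?_⟩
  obtain ⟨C, hcol, hrow⟩ := hC i
  rw [huv, Pi.smul_apply, smul_eq_mul, Nat.mul_div_cancel_left _ hg]
  refine ⟨C, hcol, fun s ↦ ?_⟩
  calc ∑ j, C s j * (g • v) j = g * ∑ j, C s j * v j := by simp [mul_sum, mul_left_comm]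
    _ ≤ g * N ^ k := Nat.mul_le_mul_left g (hrow s)

theorem stmt2 {m : ℕ} (hm : 1 ≤ m) (A : Matrix (Fin m) (Fin m) ℕ)
    (hA : A.IsPrimitiveNat) (N : ℕ) (hN : 1 ≤ N)
    (u : Fin m → ℕ) (hu : ∀ i, 0 < u i)
    (hle : ∀ i, A.mulVec u i ≤ N * u i) :
    ∃ k : ℕ, 1 ≤ k ∧ ∀ i : Fin m,
      ∃ C : Fin (u i / Finset.univ.gcd u) → Fin m → ℕ,
        (∀ j, ∑ s, C s j = (A ^ k) i j) ∧
        (∀ s, ∑ j, C s j * u j ≤ Finset.univ.gcd u * N ^ k) :=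
  stmt2_general hm A hA N u hu hle
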